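/- For every integer i ≥ 1, the learning-rate weights satisfy Σ_{n=i}^∞ α_n^i = 1 + 1/H. -/

import Mathlib

open scoped BigOperators

noncomputable section

/-- The per-step learning rate `α_t = (H+1)/(H+t)`. -/
def alphaT (H t : ℕ) : ℝ := (H + 1) / (H + t)

/-- The aggregated learning-rate weights `α_n^i`:
`α_0^0 = 1`, `α_n^0 = 0` for `n ≥ 1`, and `α_n^i = α_i ∏_{j=i+1}^n (1 - α_j)` for `1 ≤ i ≤ n`. -/
def alphaW (H n i : ℕ) : ℝ :=
  if i = 0 then (if n = 0 then 1 else 0)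
  else alphaT H i * ∏ j ∈ Finset.Icc (i + 1) n, (1 - alphaT H j)

/-!
Since `1 - α_{n+1} = n / (H + n + 1)`, the weights obey `(H + n + 1) α_{n+1}^i = n α_n^i`.
Hence `S_n := (H + n) α_n^i` satisfies `S_n - S_{n+1} = H α_n^i`, so the series telescopes to
`(S_i - lim S_n) / H`. Here `S_i = (H + i) α_i = H + 1`, and `S_n → 0` because `n S_n` is
nonincreasing for `H ≥ 1`.
-/

open Filter Topology

theorem Real.hasSum_sub_succ_of_antitone {f : ℕ → ℝ} {l : ℝ} (hf : Antitone f)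
    (h : Tendsto f atTop (𝓝 l)) : HasSum (fun n ↦ f n - f (n + 1)) (f 0 - l) := by
  refine (hasSum_iff_tendsto_nat_of_nonneg (fun n ↦ sub_nonneg.2 (hf n.le_succ)) _).2 ?_
  simpa only [Finset.sum_range_sub'] using h.const_sub (f 0)

theorem alphaT_nonneg (H t : ℕ) : 0 ≤ alphaT H t := by
  unfold alphaT; positivity

theorem one_sub_alphaT_succ (H n : ℕ) : 1 - alphaT H (n + 1) = n / (H + (n + 1)) := by
  unfold alphaT
  push_cast
  field_simp
  ring

theorem alphaW_nonneg (H n i : ℕ) : 0 ≤ alphaW H n i := by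
  unfold alphaW
  split_ifs
  · exact zero_le_one
  · exact le_rfl
  · refine mul_nonneg (alphaT_nonneg H i) (Finset.prod_nonneg fun j hj ↦ ?_)
    obtain ⟨k, rfl⟩ : ∃ k, j = k + 1 := Nat.exists_eq_add_one.2 (by grind)
    rw [one_sub_alphaT_succ]
    positivity

theorem alphaW_self {H i : ℕ} (hi : i ≠ 0) : alphaW H i i = alphaT H i := by
  simp [alphaW, hi]

theorem alphaW_succ {H n i : ℕ} (hi : i ≠ 0) (hin : i ≤ n) :
    alphaW H (n + 1) i = alphaW H n i * (n / (H + (n + 1))) := by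
  rw [alphaW, alphaW, if_neg hi, if_neg hi, Finset.prod_Icc_succ_top (by omega),
    one_sub_alphaT_succ, mul_assoc]

def scaledAlphaW (H n i : ℕ) : ℝ := (H + n) * alphaW H n i

theorem scaledAlphaW_self {H i : ℕ} (hi : i ≠ 0) : scaledAlphaW H i i = H + 1 := by
  have : (H + i : ℝ) ≠ 0 := by positivity
  rw [scaledAlphaW, alphaW_self hi, alphaT]
  field_simp

theorem scaledAlphaW_succ {H n i : ℕ} (hi : i ≠ 0) (hin : i ≤ n) :
    scaledAlphaW H (n + 1) i = n * alphaW H n i := by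
  have : (H + (n + 1) : ℝ) ≠ 0 := by positivity
  rw [scaledAlphaW, alphaW_succ hi hin]
  push_cast
  field_simp

theorem scaledAlphaW_sub_succ {H n i : ℕ} (hi : i ≠ 0) (hin : i ≤ n) :
    scaledAlphaW H n i - scaledAlphaW H (n + 1) i = H * alphaW H n i := by
  rw [scaledAlphaW_succ hi hin, scaledAlphaW]
  ring

theorem scaledAlphaW_succ_le {H n i : ℕ} (hi : i ≠ 0) (hin : i ≤ n) :
    scaledAlphaW H (n + 1) i ≤ scaledAlphaW H n i := by
  rw [← sub_nonneg, scaledAlphaW_sub_succ hi hin]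
  exact mul_nonneg (Nat.cast_nonneg H) (alphaW_nonneg H n i)

theorem scaledAlphaW_nonneg (H n i : ℕ) : 0 ≤ scaledAlphaW H n i :=
  mul_nonneg (by positivity) (alphaW_nonneg H n i)

theorem natCast_mul_scaledAlphaW_le {H n i : ℕ} (hH : 1 ≤ H) (hi : i ≠ 0) (hin : i ≤ n) :
    n * scaledAlphaW H n i ≤ i * (H + 1) := by
  induction n, hin using Nat.le_induction with
  | base => rw [scaledAlphaW_self hi]
  | succ n hin ih =>
    have hH' : (1 : ℝ) ≤ H := by exact_mod_cast hH
    calc ((n + 1 : ℕ) : ℝ) * scaledAlphaW H (n + 1) i = n * ((n + 1) * alphaW H n i) := by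
          rw [scaledAlphaW_succ hi hin]; push_cast; ring
      _ ≤ n * scaledAlphaW H n i := by
          unfold scaledAlphaW
          gcongr n * ?_
          exact mul_le_mul_of_nonneg_right (by linarith) (alphaW_nonneg H n i)
      _ ≤ i * (H + 1) := ih

theorem tendsto_scaledAlphaW {H i : ℕ} (hH : 1 ≤ H) (hi : i ≠ 0) :
    Tendsto (fun n ↦ scaledAlphaW H n i) atTop (𝓝 0) := by
  refine squeeze_zero' (.of_forall fun n ↦ scaledAlphaW_nonneg H n i) ?_
    (tendsto_const_div_atTop_nhds_zero_nat ((i : ℝ) * (H + 1)))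
  filter_upwards [eventually_ge_atTop i] with n hin
  have hn : (0 : ℝ) < n := by exact_mod_cast (Nat.pos_of_ne_zero hi).trans_le hin
  rw [le_div_iff₀ hn, mul_comm]
  exact natCast_mul_scaledAlphaW_le hH hi hin

/-- For every `i ≥ 1`, `∑_{n=i}^∞ α_n^i = 1 + 1/H`. -/
theorem alphaW_tsum_eq (H : ℕ) (hH : 1 ≤ H) (i : ℕ) (hi : 1 ≤ i) :
    ∑' m : ℕ, alphaW H (i + m) i = 1 + 1 / (H : ℝ) := by
  have hi0 : i ≠ 0 := by omega
  have hH0 : (H : ℝ) ≠ 0 := by positivity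
  have hlim : Tendsto (fun m ↦ scaledAlphaW H (i + m) i) atTop (𝓝 0) := by
    simpa only [add_comm i] using (tendsto_add_atTop_iff_nat i).2 (tendsto_scaledAlphaW hH hi0)
  have hanti : Antitone fun m ↦ scaledAlphaW H (i + m) i :=
    antitone_nat_of_succ_le fun m ↦ scaledAlphaW_succ_le hi0 (Nat.le_add_right i m)
  have hsum : HasSum (fun m ↦ H * alphaW H (i + m) i) (H + 1) := by
    simpa only [← add_assoc, scaledAlphaW_sub_succ hi0 (Nat.le_add_right i _), add_zero,
      scaledAlphaW_self hi0, sub_zero] using Real.hasSum_sub_succ_of_antitone hanti hlim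
  rw [((hasSum_mul_left_iff hH0).1 (by rwa [mul_div_cancel₀ _ hH0])).tsum_eq]
  field_simp
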